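/- Let D_{n,p} denote the degree of a uniformly random vertex in the random cluster graph CG_{n,p}, and w = p/(1-p). Then for every d ∈ {0,...,n-1}, P(D_{n,p} = d) = C(n-1, d) · w^{C(d+1,2)} · B_{n-d-1}(w) / B_n(w). -/

import Mathlib

/-!
Cluster graphs on `Fin n` are in bijection with set partitions (a graph goes to its connected
components); under it the number of edges is `∑ C(|S|, 2)` over the blocks `S`, and a vertex has
degree `d` exactly when its block has `d + 1` elements.
Averaging over the vertex `v` and exchanging the sums, one weighs the partitions in which the
block of `v` is a fixed `(d + 1)`-set `S ∋ v`. Removing `S` leaves an arbitrary partition of the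
remaining `n - d - 1` vertices, so these partitions weigh `w ^ C(d + 1, 2) · B_{n-d-1}(w)`, and
there are `C(n - 1, d)` choices of `S`.
-/

open Finset

/-- Number of intra-block pairs of a set partition. -/
def partWeight {n : ℕ} (P : Finpartition (Finset.univ : Finset (Fin n))) : ℕ :=
  ∑ S ∈ P.parts, (S.card).choose 2

/-- The generalized Bell number `B_n(w) = ∑_P ∏_{S block of P} w^{C(|S|,2)}`. -/
noncomputable def genBell (n : ℕ) (w : ℝ) : ℝ :=
  ∑ P : Finpartition (Finset.univ : Finset (Fin n)), ∏ S ∈ P.parts, w ^ (S.card).choose 2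

/-- A cluster graph: every connected component is a clique, i.e. any two distinct
vertices in the same component are adjacent. -/
def IsClusterGraph {V : Type*} (G : SimpleGraph V) : Prop :=
  ∀ u v : V, G.Reachable u v → u ≠ v → G.Adj u v

/-- The number of edges of a simple graph. -/
noncomputable def numEdges {V : Type*} (G : SimpleGraph V) : ℕ := Nat.card G.edgeSet

noncomputable instance (n : ℕ) :
    DecidablePred (fun G : SimpleGraph (Fin n) => IsClusterGraph G) :=
  fun _ => Classical.propDecidable _

/-- The degree of a vertex. -/
noncomputable def vertexDegree {V : Type*} (G : SimpleGraph V) (v : V) : ℕ :=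
  Nat.card {u : V // G.Adj v u}

namespace Finpartition

theorem parts_avoid_of_mem {α : Type*} [GeneralizedBooleanAlgebra α] [DecidableEq α] {a b : α}
    (P : Finpartition a) (hb : b ∈ P.parts) : (P.avoid b).parts = P.parts.erase b := by
  ext c
  rw [mem_avoid, mem_erase]
  constructor
  · rintro ⟨d, hd, hdb, rfl⟩
    have hne : d ≠ b := by rintro rfl; exact hdb le_rfl
    have hdisj : Disjoint d b := P.disjoint hd hb hne
    rw [hdisj.sdiff_eq_left]
    exact ⟨hne, hd⟩
  · rintro ⟨hcb, hc⟩
    have hdisj : Disjoint c b := P.disjoint hc hb hcb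
    exact ⟨c, hc, fun hle => P.ne_bot hc (hdisj.eq_bot_of_le hle), hdisj.sdiff_eq_left⟩

variable {α β : Type*} [DecidableEq α] [DecidableEq β]

theorem sum_sum_parts {M : Type*} [AddCommMonoid M] {s : Finset α} (P : Finpartition s)
    (f : α → M) : ∑ T ∈ P.parts, ∑ a ∈ T, f a = ∑ a ∈ s, f a := by
  conv_rhs => rw [← P.biUnion_parts]
  exact (sum_biUnion P.disjoint).symm

theorem image_part {s : Finset α} (P : Finpartition s) : s.image P.part = P.parts := by
  ext T
  rw [mem_image]
  constructor
  · rintro ⟨a, ha, rfl⟩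
    exact P.part_mem.2 ha
  · intro hT
    obtain ⟨a, ha⟩ := P.nonempty_of_mem_parts hT
    exact ⟨a, P.le hT ha, P.part_eq_of_mem hT ha⟩

theorem ext_part {s : Finset α} {P Q : Finpartition s} (h : ∀ a, P.part a = Q.part a) :
    P = Q := by
  ext1
  rw [← image_part, ← image_part, funext h]

theorem sum_prod_parts_of_part_eq {M : Type*} [CommSemiring M] (g : Finset α → M)
    {s S : Finset α} {a : α} (ha : a ∈ S) (hS : S ⊆ s) :
    ∑ P : Finpartition s with P.part a = S, ∏ T ∈ P.parts, g T
      = g S * ∑ Q : Finpartition (s \ S), ∏ T ∈ Q.parts, g T := by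
  have hS₀ : S ≠ ⊥ := ne_empty_of_mem ha
  have hsup : s \ S ⊔ S = s := sdiff_sup_cancel hS
  have mem_parts {P : Finpartition s} (hP : P.part a = S) : S ∈ P.parts :=
    hP ▸ P.part_mem.2 (hS ha)
  have notMem_parts (Q : Finpartition (s \ S)) : S ∉ Q.parts := fun h =>
    (mem_sdiff.1 (Q.le h ha)).2 ha
  rw [mul_sum]
  refine sum_nbij' (fun P => P.avoid S) (fun Q => Q.extend hS₀ sdiff_disjoint hsup)
    (fun _ _ => mem_univ _) (fun Q _ => ?_) (fun P hP => ?_) (fun Q _ => ?_) (fun P hP => ?_)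
  · simp only [mem_filter, mem_univ, true_and]
    exact part_eq_of_mem _ (by simp) ha
  · rw [mem_filter] at hP
    ext1
    rw [extend_parts, parts_avoid_of_mem _ (mem_parts hP.2), insert_erase (mem_parts hP.2)]
  · ext1
    rw [parts_avoid_of_mem _ (by simp), extend_parts, erase_insert (notMem_parts Q)]
  · rw [mem_filter] at hP
    rw [parts_avoid_of_mem _ (mem_parts hP.2), mul_prod_erase _ _ (mem_parts hP.2)]

noncomputable def mapEquiv (f : α ↪ β) (s : Finset α) :
    Finpartition s ≃ Finpartition (s.map f) where
  toFun P :=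
    { parts := P.parts.map (mapEmbedding f).toEmbedding
      supIndep := by
        rw [supIndep_iff_pairwiseDisjoint, coe_map]
        rintro _ ⟨T, hT, rfl⟩ _ ⟨T', hT', rfl⟩ hne
        exact (disjoint_map f).2 (P.disjoint hT hT' fun h => hne (h ▸ rfl))
      sup_parts := by
        ext b
        simp only [sup_map, mem_sup, Function.comp_apply, id, RelEmbedding.coe_toEmbedding,
          mapEmbedding_apply, mem_map]
        constructor
        · rintro ⟨T, hT, a, ha, rfl⟩
          exact ⟨a, P.le hT ha, rfl⟩
        · rintro ⟨a, ha, rfl⟩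
          obtain ⟨T, hT, haT⟩ := P.exists_mem ha
          exact ⟨T, hT, a, haT, rfl⟩
      bot_notMem := by simp }
  invFun R :=
    { parts := R.parts.image (fun T => T.preimage f f.injective.injOn)
      supIndep := by
        rw [supIndep_iff_pairwiseDisjoint, coe_image]
        rintro _ ⟨T, hT, rfl⟩ _ ⟨T', hT', rfl⟩ hne
        exact Finset.disjoint_preimage (hs := f.injective.injOn) (ht := f.injective.injOn)
          (R.disjoint hT hT' fun h => hne (h ▸ rfl))
      sup_parts := by
        ext a
        simp only [sup_image, mem_sup, Function.comp_apply, id, mem_preimage]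
        constructor
        · rintro ⟨T, hT, ha⟩
          exact (mem_map' f).1 (R.le hT ha)
        · intro ha
          exact R.exists_mem (mem_map_of_mem f ha)
      bot_notMem := by
        simp only [bot_eq_empty, mem_image, not_exists, not_and]
        intro T hT hempty
        obtain ⟨b, hb⟩ := R.nonempty_of_mem_parts hT
        obtain ⟨a, -, rfl⟩ := mem_map.1 (R.le hT hb)
        exact notMem_empty a (hempty ▸ mem_preimage.2 hb) }
  left_inv P := by
    ext1
    show (P.parts.map _).image _ = P.parts
    rw [map_eq_image, image_image]
    simp [Function.comp_def]
  right_inv R := by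
    ext1
    show (R.parts.image _).map _ = R.parts
    rw [map_eq_image, image_image]
    refine (image_congr fun T hT => ?_).trans image_id
    ext b
    simp only [Function.comp_apply, RelEmbedding.coe_toEmbedding, mapEmbedding_apply, mem_map,
      mem_preimage, id]
    constructor
    · rintro ⟨a, ha, rfl⟩
      exact ha
    · intro hb
      obtain ⟨a, -, rfl⟩ := mem_map.1 (R.le hT hb)
      exact ⟨a, hb, rfl⟩

theorem parts_mapEquiv (f : α ↪ β) {s : Finset α} (P : Finpartition s) :
    (mapEquiv f s P).parts = P.parts.map (mapEmbedding f).toEmbedding := rfl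

theorem sum_prod_card_parts_eq_of_map_eq {M : Type*} [CommSemiring M] (g : ℕ → M) (f : α ↪ β)
    {s : Finset α} {t : Finset β} (h : s.map f = t) :
    ∑ P : Finpartition s, ∏ T ∈ P.parts, g #T = ∑ Q : Finpartition t, ∏ T ∈ Q.parts, g #T := by
  subst h
  rw [← (mapEquiv f s).sum_comp]
  simp [parts_mapEquiv, prod_map]

end Finpartition

theorem genBell_card {α : Type*} [DecidableEq α] (t : Finset α) (w : ℝ) :
    genBell #t w = ∑ P : Finpartition t, ∏ T ∈ P.parts, w ^ (#T).choose 2 :=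
  Finpartition.sum_prod_card_parts_eq_of_map_eq (fun k => w ^ k.choose 2)
    (t.equivFin.symm.toEmbedding.trans (.subtype _)) (by simp [← map_map, attach_map_val])

theorem vertexDegree_eq_degree {V : Type*} (G : SimpleGraph V) (v : V)
    [Fintype (G.neighborSet v)] : vertexDegree G v = G.degree v := by
  rw [vertexDegree, ← G.card_neighborSet_eq_degree, ← Nat.card_eq_fintype_card]
  rfl

theorem numEdges_eq_card_edgeFinset {V : Type*} (G : SimpleGraph V) [Fintype G.edgeSet] :
    numEdges G = #G.edgeFinset := by
  rw [numEdges, Nat.card_eq_fintype_card, SimpleGraph.edgeFinset_card]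

namespace Finpartition

variable {V : Type*} [Fintype V] [DecidableEq V]

def toGraph (P : Finpartition (univ : Finset V)) : SimpleGraph V where
  Adj u v := u ≠ v ∧ P.part u = P.part v
  symm := ⟨fun _ _ h => ⟨h.1.symm, h.2.symm⟩⟩
  loopless := ⟨fun _ h => h.1 rfl⟩

variable (P : Finpartition (univ : Finset V))

theorem toGraph_adj {u v : V} : P.toGraph.Adj u v ↔ u ≠ v ∧ P.part u = P.part v := Iff.rfl

instance : DecidableRel P.toGraph.Adj :=
  fun u v => inferInstanceAs (Decidable (u ≠ v ∧ P.part u = P.part v))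

theorem toGraph_reachable_iff {u v : V} : P.toGraph.Reachable u v ↔ P.part u = P.part v := by
  constructor
  · rintro ⟨p⟩
    induction p with
    | nil => rfl
    | cons h _ ih => exact h.2.trans ih
  · intro h
    by_cases huv : u = v
    · exact huv ▸ SimpleGraph.Reachable.refl u
    · exact SimpleGraph.Adj.reachable ⟨huv, h⟩

theorem isClusterGraph_toGraph : IsClusterGraph P.toGraph :=
  fun _ _ huv hne => ⟨hne, (toGraph_reachable_iff P).1 huv⟩

theorem neighborFinset_toGraph (v : V) : P.toGraph.neighborFinset v = (P.part v).erase v := by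
  ext u
  rw [SimpleGraph.mem_neighborFinset, toGraph_adj, mem_erase,
    P.mem_part_iff_part_eq_part (mem_univ u) (mem_univ v)]
  exact ⟨fun h => ⟨h.1.symm, h.2.symm⟩, fun h => ⟨h.1.symm, h.2.symm⟩⟩

theorem degree_toGraph (v : V) : P.toGraph.degree v = #(P.part v) - 1 := by
  rw [← SimpleGraph.card_neighborFinset_eq_degree, neighborFinset_toGraph,
    card_erase_of_mem (P.mem_part (mem_univ v))]

theorem numEdges_toGraph : numEdges P.toGraph = ∑ T ∈ P.parts, (#T).choose 2 := by
  rw [numEdges_eq_card_edgeFinset]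
  refine Nat.eq_of_mul_eq_mul_left two_pos ?_
  calc 2 * #P.toGraph.edgeFinset
      = ∑ v, P.toGraph.degree v := (P.toGraph.sum_degrees_eq_twice_card_edges).symm
    _ = ∑ T ∈ P.parts, ∑ v ∈ T, (#T - 1) := by
        rw [← P.sum_sum_parts]
        refine sum_congr rfl fun T hT => sum_congr rfl fun v hv => ?_
        rw [degree_toGraph, P.part_eq_of_mem hT hv]
    _ = 2 * ∑ T ∈ P.parts, (#T).choose 2 := by
        rw [mul_sum]
        refine sum_congr rfl fun T _ => ?_
        rw [sum_const, smul_eq_mul, Nat.choose_two_right,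
          Nat.mul_div_cancel' (Nat.even_mul_pred_self _).two_dvd]

theorem card_vertexDegree_toGraph_eq (d : ℕ) :
    Nat.card {v : V // vertexDegree P.toGraph v = d} = #{v | #(P.part v) = d + 1} := by
  rw [Nat.card_eq_fintype_card, Fintype.card_subtype]
  refine congrArg card (filter_congr fun v _ => ?_)
  have hpos : 0 < #(P.part v) := card_pos.2 ⟨v, P.mem_part (mem_univ v)⟩
  rw [vertexDegree_eq_degree, degree_toGraph]
  omega

end Finpartition

namespace SimpleGraph

variable {V : Type*} [Fintype V] [DecidableEq V]

open scoped Classical in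
noncomputable def componentPartition (G : SimpleGraph V) : Finpartition (univ : Finset V) :=
  Finpartition.ofSetoid G.reachableSetoid

theorem mem_part_componentPartition_iff {G : SimpleGraph V} {u v : V} :
    v ∈ G.componentPartition.part u ↔ G.Reachable u v := by
  classical
  exact Finpartition.mem_part_ofSetoid_iff_rel

theorem componentPartition_toGraph (P : Finpartition (univ : Finset V)) :
    P.toGraph.componentPartition = P := by
  refine Finpartition.ext_part fun u => ?_
  ext v
  rw [mem_part_componentPartition_iff, Finpartition.toGraph_reachable_iff,
    P.mem_part_iff_part_eq_part (mem_univ v) (mem_univ u), eq_comm]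

theorem IsClusterGraph.toGraph_componentPartition {G : SimpleGraph V} (hG : IsClusterGraph G) :
    G.componentPartition.toGraph = G := by
  ext u v
  have hpart : G.componentPartition.part u = G.componentPartition.part v ↔ G.Reachable u v := by
    rw [← G.componentPartition.mem_part_iff_part_eq_part (mem_univ u) (mem_univ v),
      mem_part_componentPartition_iff, reachable_comm]
  rw [Finpartition.toGraph_adj, hpart]
  exact ⟨fun h => hG u v h.2 h.1, fun h => ⟨h.ne, h.reachable⟩⟩

theorem sum_isClusterGraph_eq_sum_finpartition [DecidablePred (IsClusterGraph (V := V))]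
    {M : Type*} [AddCommMonoid M] (F : SimpleGraph V → M) :
    ∑ G with IsClusterGraph G, F G = ∑ P : Finpartition (univ : Finset V), F P.toGraph :=
  sum_nbij' componentPartition Finpartition.toGraph (fun _ _ => mem_univ _)
    (fun P _ => mem_filter.2 ⟨mem_univ _, P.isClusterGraph_toGraph⟩)
    (fun _ hG => IsClusterGraph.toGraph_componentPartition (mem_filter.1 hG).2)
    (fun P _ => componentPartition_toGraph P)
    (fun _ hG => by rw [IsClusterGraph.toGraph_componentPartition (mem_filter.1 hG).2])

end SimpleGraph

theorem sum_prod_parts_of_card_part_eq (n d : ℕ) (v : Fin n) (w : ℝ) :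
    ∑ P : Finpartition (univ : Finset (Fin n)) with #(P.part v) = d + 1,
        ∏ T ∈ P.parts, w ^ (#T).choose 2
      = (n - 1).choose d * (w ^ (d + 1).choose 2 * genBell (n - d - 1) w) := by
  set blocks := (univ.powersetCard (d + 1)).filter ({v} ⊆ ·)
  rw [← sum_fiberwise_of_maps_to (g := fun P => P.part v) (t := blocks) fun P hP => by
    simpa [blocks, P.mem_part (mem_univ v)] using (mem_filter.1 hP).2]
  have fiber : ∀ S ∈ blocks,
      ∑ P ∈ {P : Finpartition (univ : Finset (Fin n)) | #(P.part v) = d + 1} with P.part v = S,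
          ∏ T ∈ P.parts, w ^ (#T).choose 2
        = w ^ (d + 1).choose 2 * genBell (n - d - 1) w := by
    intro S hS
    obtain ⟨hcard, hvS⟩ : #S = d + 1 ∧ v ∈ S := by simpa [blocks] using hS
    rw [filter_filter, filter_congr (q := fun P => P.part v = S) fun P _ => by grind,
      Finpartition.sum_prod_parts_of_part_eq (fun T => w ^ (#T).choose 2) hvS (subset_univ S),
      ← genBell_card, card_univ_sdiff, hcard, Fintype.card_fin, Nat.sub_sub]
  rw [sum_congr rfl fiber, sum_const, nsmul_eq_mul,
    card_filter_powersetCard_subset _ _ _ (by simp) (by simp)]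
  simp

theorem sum_pow_mul_card_part_eq (n d : ℕ) (w : ℝ) :
    ∑ P : Finpartition (univ : Finset (Fin n)),
        w ^ (∑ T ∈ P.parts, (#T).choose 2) * #{v | #(P.part v) = d + 1}
      = n * ((n - 1).choose d * (w ^ (d + 1).choose 2 * genBell (n - d - 1) w)) := by
  calc _ = ∑ v : Fin n, ∑ P : Finpartition (univ : Finset (Fin n)) with #(P.part v) = d + 1,
          ∏ T ∈ P.parts, w ^ (#T).choose 2 := by
        simp_rw [sum_filter, card_filter, Nat.cast_sum, mul_sum, prod_pow_eq_pow_sum]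
        rw [sum_comm]
        simp
    _ = _ := by simp [sum_prod_parts_of_card_part_eq]

theorem rcg_degree_distribution_general (n : ℕ) (hn : 1 ≤ n) (p : ℝ) (d : ℕ) :
    (∑ G ∈ Finset.univ.filter (fun G : SimpleGraph (Fin n) => IsClusterGraph G),
        ((p / (1 - p)) ^ numEdges G / genBell n (p / (1 - p))) *
          ((Nat.card {v : Fin n // vertexDegree G v = d} : ℝ) / n))
      = ((n - 1).choose d : ℝ) * (p / (1 - p)) ^ ((d + 1).choose 2) *
          genBell (n - d - 1) (p / (1 - p)) / genBell n (p / (1 - p)) := by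
  set w := p / (1 - p)
  have hn₀ : (n : ℝ) ≠ 0 := Nat.cast_ne_zero.2 (by omega)
  rw [SimpleGraph.sum_isClusterGraph_eq_sum_finpartition]
  simp only [Finpartition.numEdges_toGraph, Finpartition.card_vertexDegree_toGraph_eq,
    div_mul_div_comm, ← sum_div, sum_pow_mul_card_part_eq]
  rw [mul_comm (genBell n w), mul_div_mul_left _ _ hn₀]
  ring

/-- degree distribution of the random cluster graph:
`P(D_{n,p} = d) = C(n-1,d) · w^{C(d+1,2)} · B_{n-d-1}(w) / B_n(w)`. -/
theorem rcg_degree_distribution (n : ℕ) (hn : 1 ≤ n) (p : ℝ) (hp : p ∈ Set.Ioo (0 : ℝ) 1)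
    (d : ℕ) (hd : d ≤ n - 1) :
    (∑ G ∈ Finset.univ.filter (fun G : SimpleGraph (Fin n) => IsClusterGraph G),
        ((p / (1 - p)) ^ numEdges G / genBell n (p / (1 - p))) *
          ((Nat.card {v : Fin n // vertexDegree G v = d} : ℝ) / n))
      = ((n - 1).choose d : ℝ) * (p / (1 - p)) ^ ((d + 1).choose 2) *
          genBell (n - d - 1) (p / (1 - p)) / genBell n (p / (1 - p)) :=
  rcg_degree_distribution_general n hn p d
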